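/- arXiv:2601.10234 — 2 statements merged into one kernel-verified Lean document; each statement's English description precedes it below -/
import Mathlib

section
/- Let N ≥ 2 and 2 ≤ j ≤ N, and let s be a positive integer with 2s < N. Then s − sin(s(j−1)π/N)·cos((s+1)(j−1)π/N) / sin((j−1)π/N) = ∑_{k=1}^{s} (1 − cos(2k(j−1)π/N)), and this quantity is strictly positive. -/
open Real Finset

lemma sum_cos_aux (θ : ℝ) (s : ℕ) :
    Real.sin θ * ∑ k ∈ Finset.Icc 1 s, Real.cos (2 * k * θ) =
      Real.sin (s * θ) * Real.cos ((s + 1) * θ) := by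
  induction s with
  | zero => simp
  | succ n ih =>
    rw [Finset.sum_Icc_succ_top (by omega), mul_add, ih]
    push_cast
    have h1 : ((n : ℝ) + 1) * θ = n * θ + θ := by ring
    have h2 : ((n : ℝ) + 1 + 1) * θ = (n * θ + θ) + θ := by ring
    have h3 : 2 * ((n : ℝ) + 1) * θ = (n * θ + θ) + (n * θ + θ) := by ring
    rw [h1, h2, h3, Real.sin_add, Real.cos_add (n * θ + θ) θ,
      Real.cos_add (n * θ + θ) (n * θ + θ), Real.sin_add, Real.cos_add]
    linear_combination (Real.sin ((n : ℝ) * θ) ^ 2 * Real.sin θ -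
      Real.sin ((n : ℝ) * θ) * Real.cos ((n : ℝ) * θ) * Real.cos θ) *
      Real.sin_sq_add_cos_sq θ

theorem mode_gap_positive (N j s : ℕ) (hN : 2 ≤ N) (hj₁ : 2 ≤ j) (hj₂ : j ≤ N)
    (hs : 1 ≤ s) (hsN : 2 * s < N) :
    (s : ℝ) -
        Real.sin (s * (j - 1) * π / N) * Real.cos ((s + 1) * (j - 1) * π / N) /
          Real.sin ((j - 1) * π / N)
      = ∑ k ∈ Finset.Icc 1 s, (1 - Real.cos (2 * k * (j - 1) * π / N)) ∧
    0 < (s : ℝ) -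
        Real.sin (s * (j - 1) * π / N) * Real.cos ((s + 1) * (j - 1) * π / N) /
          Real.sin ((j - 1) * π / N) := by
  have hN0 : (0 : ℝ) < N := by positivity
  set θ : ℝ := ((j : ℝ) - 1) * π / N with hθ
  have hj1 : (1 : ℝ) ≤ (j : ℝ) - 1 := by
    have : (2 : ℝ) ≤ j := by exact_mod_cast hj₁
    linarith
  have hjN : (j : ℝ) - 1 < N := by
    have : (j : ℝ) ≤ N := by exact_mod_cast hj₂
    linarith
  have hθpos : 0 < θ := by
    apply div_pos _ hN0
    positivity
  have hθlt : θ < π := by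
    rw [hθ, div_lt_iff₀ hN0]
    have := Real.pi_pos
    nlinarith
  have hsin : 0 < Real.sin θ := Real.sin_pos_of_pos_of_lt_pi hθpos hθlt
  have hrw : ∀ m : ℝ, m * ((j : ℝ) - 1) * π / N = m * θ := by
    intro m; rw [hθ]; field_simp
  have hkey : Real.sin ((s : ℝ) * ((j : ℝ) - 1) * π / N) *
        Real.cos (((s : ℝ) + 1) * ((j : ℝ) - 1) * π / N) / Real.sin θ
      = ∑ k ∈ Finset.Icc 1 s, Real.cos (2 * k * θ) := by
    rw [hrw, hrw, div_eq_iff hsin.ne', ← sum_cos_aux θ s]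
    ring
  have hsum : ∑ k ∈ Finset.Icc 1 s, (1 - Real.cos (2 * (k : ℝ) * ((j : ℝ) - 1) * π / N))
      = ∑ k ∈ Finset.Icc 1 s, (1 - Real.cos (2 * (k : ℝ) * θ)) := by
    apply Finset.sum_congr rfl
    intro k _
    rw [show (2 : ℝ) * k * ((j : ℝ) - 1) * π / N = (2 * k) * ((j : ℝ) - 1) * π / N by ring,
      hrw]
  have heq : (s : ℝ) - Real.sin ((s : ℝ) * ((j : ℝ) - 1) * π / N) *
        Real.cos (((s : ℝ) + 1) * ((j : ℝ) - 1) * π / N) / Real.sin θ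
      = ∑ k ∈ Finset.Icc 1 s, (1 - Real.cos (2 * (k : ℝ) * θ)) := by
    rw [hkey, Finset.sum_sub_distrib, Finset.sum_const, Nat.card_Icc]
    simp
  have hsinθeq : Real.sin (((j : ℝ) - 1) * π / N) = Real.sin θ := rfl
  have hpos : 0 < ∑ k ∈ Finset.Icc 1 s, (1 - Real.cos (2 * (k : ℝ) * θ)) := by
    apply Finset.sum_pos' (fun k _ => by nlinarith [Real.cos_le_one (2 * (k : ℝ) * θ)])
    refine ⟨1, Finset.mem_Icc.mpr ⟨le_refl 1, hs⟩, ?_⟩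
    have h2θ : (2 : ℝ) * 1 * θ ≠ 0 := by positivity
    have hlt : (2 : ℝ) * 1 * θ < 2 * π := by nlinarith [hθlt]
    have hne : Real.cos (2 * 1 * θ) ≠ 1 := by
      intro h
      exact h2θ ((Real.cos_eq_one_iff_of_lt_of_lt (by linarith) hlt).mp h)
    have := Real.cos_le_one (2 * 1 * θ)
    push_cast
    cases lt_or_eq_of_le this with
    | inl h => linarith
    | inr h => exact absurd h hne
  constructor
  · rw [hsinθeq] at *
    rw [heq, hsum]
  · rw [hsinθeq, heq]
    exact hpos
end

section
/- Let r : [0,∞) → ℝ be differentiable with r(0) > 0 and suppose ṙ(t) ≥ (μ − δ − r(t)²)·r(t) for all t ≥ 0, where 0 < δ < μ. Then r(t) ≥ min(r(0), √(μ − δ)) for all t ≥ 0. -/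
open Real

theorem amplitude_lower_barrier (μ δ : ℝ) (hδ : 0 < δ) (hδμ : δ < μ) (r : ℝ → ℝ)
    (hdiff : ∀ t : ℝ, 0 ≤ t → DifferentiableAt ℝ r t)
    (h0 : 0 < r 0)
    (hineq : ∀ t : ℝ, 0 ≤ t → (μ - δ - r t ^ 2) * r t ≤ deriv r t) :
    ∀ t : ℝ, 0 ≤ t → min (r 0) (Real.sqrt (μ - δ)) ≤ r t := by
  set b := min (r 0) (Real.sqrt (μ - δ)) with hbdef
  have hμδ : 0 < μ - δ := by linarith
  have hsq : Real.sqrt (μ - δ) ^ 2 = μ - δ := Real.sq_sqrt hμδ.le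
  have hb : 0 < b := lt_min h0 (Real.sqrt_pos.2 hμδ)
  have key : ∀ ε : ℝ, 0 < ε → ε < b → ∀ t : ℝ, 0 ≤ t → b - ε ≤ r t := by
    intro ε hε hεb t ht
    have hbe : 0 < b - ε := by linarith
    have main : ∀ ⦃x⦄, x ∈ Set.Icc 0 t → -r x ≤ (fun _ : ℝ => -(b - ε)) x := by
      apply image_le_of_deriv_right_lt_deriv_boundary' (f := fun s => -r s)
        (f' := fun s => -(deriv r s)) (B := fun _ : ℝ => -(b - ε)) (B' := fun _ => 0)
      · intro x hx
        exact ((hdiff x hx.1).neg.differentiableWithinAt).continuousWithinAt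
      · intro x hx
        exact ((hdiff x hx.1).hasDerivAt.neg).hasDerivWithinAt
      · have : b ≤ r 0 := min_le_left _ _
        show -r 0 ≤ -(b - ε)
        linarith
      · exact continuousOn_const
      · intro x hx
        exact (hasDerivWithinAt_const _ _ _)
      · intro x hx hfx
        have hrx : r x = b - ε := by
          have := hfx
          simp only [neg_inj] at this
          linarith [this]
        have hxpos : (0:ℝ) ≤ x := hx.1
        have h1 := hineq x hxpos
        have hble : b ≤ Real.sqrt (μ - δ) := min_le_right _ _
        have hsq2 : (b - ε) ^ 2 < μ - δ := by nlinarith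
        have : 0 < (μ - δ - r x ^ 2) * r x := by
          rw [hrx]; exact mul_pos (by linarith) hbe
        have : 0 < deriv r x := lt_of_lt_of_le this h1
        simpa using this
    have := main (Set.mem_Icc.2 ⟨ht, le_refl t⟩)
    simp only at this
    linarith
  intro t ht
  by_contra h
  push_neg at h
  set ε := min ((b - r t) / 2) (b / 2) with hεdef
  have hε : 0 < ε := lt_min (by linarith) (by linarith)
  have hεb : ε < b := lt_of_le_of_lt (min_le_right _ _) (by linarith)
  have h1 : b - ε ≤ r t := key ε hε hεb t ht
  have h2 : ε ≤ (b - r t) / 2 := min_le_left _ _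
  linarith
end
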